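/- Let I(r) = √3·∫_r¹ dξ/√(1-ξ³) and, for K > 0, define f_K(r) = (I(r))⁶·(1 - (1+K)r³) on the interval (L₀^M, 1), where L₀^M = (1/(1+K))^{1/3}. Then f_K < 0 on (L₀^M, 1), f_K(r) → 0 as r → (L₀^M)⁺ and as r → 1⁻, and f_K has exactly one critical point in (L₀^M, 1) (its unique minimum point). -/

import Mathlib

open intervalIntegral

noncomputable def Ifun : ℝ → ℝ :=
  fun r => Real.sqrt 3 * ∫ ξ in r..1, 1 / Real.sqrt (1 - ξ^3)

/-!
Write `a = 1 + K`. The function `f a r = I(r)⁶ (1 - a r³)` vanishes at `L₀ = a^(-1/3)` (second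
factor) and at `1` (first factor) and is negative in between, so on the compact interval `[L₀, 1]`
it attains its minimum at an interior point, which is a critical point. Since
`f' = 3 I⁶ (1 - a r³) (w₁ - w₂)` with `w₁ = 2 I'/I` and `w₂ = a r² / (1 - a r³)`, the critical
points in `(L₀, 1)` are the solutions of `w₁ = w₂`. Because `I' = -√3 / √(1 - r³)` is negative and
decreasing while `I` is positive and decreasing, `w₁` is strictly decreasing, whereas `w₂` is
strictly increasing on `(L₀, 1)`; hence there is only one critical point.
-/

open Set MeasureTheory Filter Topology

theorem StrictAntiOn.eq_of_eq_of_strictMonoOn {α β : Type*} [LinearOrder α] [Preorder β]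
    {u v : α → β} {s : Set α} (hu : StrictAntiOn u s) (hv : StrictMonoOn v s) {x y : α}
    (hx : x ∈ s) (hy : y ∈ s) (hxv : u x = v x) (hyv : u y = v y) : x = y := by
  wlog hxy : x < y generalizing x y
  · rcases (not_lt.1 hxy).lt_or_eq with h | h
    · exact (this hy hx hyv hxv h).symm
    · exact h.symm
  have hv' := hv hx hy hxy
  rw [← hxv, ← hyv] at hv'
  exact absurd hv' (hu hx hy hxy).not_gt

namespace LevelCurve

noncomputable def integrand (ξ : ℝ) : ℝ := 1 / Real.sqrt (1 - ξ ^ 3)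

lemma pow_three_lt_one {ξ : ℝ} (h : ξ < 1) : ξ ^ 3 < 1 := by
  simpa using Odd.strictMono_pow (R := ℝ) (n := 3) (by decide) h

lemma integrand_pos {ξ : ℝ} (h : ξ < 1) : 0 < integrand ξ :=
  one_div_pos.2 (Real.sqrt_pos.2 (sub_pos.2 (pow_three_lt_one h)))

lemma strictMonoOn_integrand : StrictMonoOn integrand (Iio 1) := by
  intro r hr s hs hrs
  have hs3 : 0 < 1 - s ^ 3 := sub_pos.2 (pow_three_lt_one hs)
  have hrs3 : r ^ 3 < s ^ 3 := Odd.strictMono_pow (by decide) hrs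
  exact one_div_lt_one_div_of_lt (Real.sqrt_pos.2 hs3) (Real.sqrt_lt_sqrt hs3.le (by linarith))

lemma continuousOn_integrand : ContinuousOn integrand (Iio 1) :=
  continuousOn_const.div (by fun_prop) fun _ hξ =>
    (Real.sqrt_pos.2 (sub_pos.2 (pow_three_lt_one hξ))).ne'

lemma measurable_integrand : Measurable integrand := by
  unfold integrand; fun_prop

lemma integrand_le_one_sub_rpow {x : ℝ} (hx0 : 0 ≤ x) (hx1 : x < 1) :
    integrand x ≤ (1 - x) ^ (-(1 / 2) : ℝ) := by
  have h1x : 0 < 1 - x := sub_pos.2 hx1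
  rw [Real.rpow_neg h1x.le, ← Real.sqrt_eq_rpow, ← one_div]
  refine one_div_le_one_div_of_le (Real.sqrt_pos.2 h1x) (Real.sqrt_le_sqrt ?_)
  nlinarith [mul_nonneg (mul_nonneg hx0 h1x.le) (by linarith : (0:ℝ) ≤ 1 + x)]

lemma intervalIntegrable_integrand_zero_one : IntervalIntegrable integrand volume 0 1 := by
  have hdom : IntervalIntegrable (fun x : ℝ => (1 - x) ^ (-(1 / 2) : ℝ)) volume 0 1 := by
    simpa using (intervalIntegrable_rpow' (a := 1) (b := 0)
      (by norm_num : (-1 : ℝ) < -(1 / 2))).comp_sub_left 1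
  refine hdom.mono_fun' measurable_integrand.aestronglyMeasurable ?_
  rw [EventuallyLE, ae_restrict_iff' measurableSet_uIoc, uIoc_of_le zero_le_one,
    ← ae_restrict_iff' measurableSet_Ioc, ← restrict_Ioo_eq_restrict_Ioc,
    ae_restrict_iff' measurableSet_Ioo]
  filter_upwards with x ⟨hx0, hx1⟩
  rw [Real.norm_eq_abs, abs_of_pos (integrand_pos hx1)]
  exact integrand_le_one_sub_rpow hx0.le hx1

lemma intervalIntegrable_integrand {a : ℝ} (ha : a ≤ 1) :
    IntervalIntegrable integrand volume a 1 := by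
  rcases le_or_gt 0 a with ha0 | ha0
  · exact intervalIntegrable_integrand_zero_one.mono_set
      (uIcc_subset_uIcc (mem_uIcc_of_le ha0 ha) right_mem_uIcc)
  · refine (ContinuousOn.intervalIntegrable ?_).trans intervalIntegrable_integrand_zero_one
    exact continuousOn_integrand.mono fun x hx => by
      rw [uIcc_of_le ha0.le] at hx; exact hx.2.trans_lt one_pos

lemma Ifun_one : Ifun 1 = 0 := by simp [Ifun]

lemma hasDerivAt_Ifun {r : ℝ} (hr : r < 1) :
    HasDerivAt Ifun (-(Real.sqrt 3 * integrand r)) r := by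
  rw [← mul_neg]
  exact (integral_hasDerivAt_left (intervalIntegrable_integrand hr.le)
    measurable_integrand.stronglyMeasurable.stronglyMeasurableAtFilter
    (continuousOn_integrand.continuousAt (Iio_mem_nhds hr))).const_mul _

lemma deriv_Ifun {r : ℝ} (hr : r < 1) : deriv Ifun r = -(Real.sqrt 3 * integrand r) :=
  (hasDerivAt_Ifun hr).deriv

lemma deriv_Ifun_neg {r : ℝ} (hr : r < 1) : deriv Ifun r < 0 := by
  rw [deriv_Ifun hr]
  exact neg_neg_of_pos (mul_pos (by positivity) (integrand_pos hr))

lemma continuousOn_Ifun {a : ℝ} (ha : a ≤ 1) : ContinuousOn Ifun (Icc a 1) := by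
  have hint : IntegrableOn integrand (Icc a 1) :=
    (intervalIntegrable_iff_integrableOn_Icc_of_le ha).1 (intervalIntegrable_integrand ha)
  rw [← uIcc_of_le ha] at hint ⊢
  exact continuousOn_const.mul (continuousOn_primitive_interval_left hint)

lemma Ifun_lt_Ifun {r s : ℝ} (hrs : r < s) (hs : s ≤ 1) : Ifun s < Ifun r :=
  strictAntiOn_of_deriv_neg (convex_Icc r 1) (continuousOn_Ifun (hrs.le.trans hs))
    (fun x hx => deriv_Ifun_neg (by rw [interior_Icc] at hx; exact hx.2))
    (left_mem_Icc.2 (hrs.le.trans hs)) ⟨hrs.le, hs⟩ hrs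

lemma Ifun_pos {r : ℝ} (hr : r < 1) : 0 < Ifun r :=
  Ifun_one ▸ Ifun_lt_Ifun hr le_rfl

noncomputable def L₀ (a : ℝ) : ℝ := (1 / a) ^ ((1 : ℝ) / 3)

noncomputable def f (a r : ℝ) : ℝ := Ifun r ^ 6 * (1 - a * r ^ 3)

noncomputable def w₁ (r : ℝ) : ℝ := 2 * deriv Ifun r / Ifun r

noncomputable def w₂ (a r : ℝ) : ℝ := a * r ^ 2 / (1 - a * r ^ 3)

variable {a : ℝ}

lemma L₀_pos (ha : 0 < a) : 0 < L₀ a := by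
  unfold L₀; positivity

lemma mul_L₀_pow_three (ha : 0 < a) : a * L₀ a ^ 3 = 1 := by
  rw [L₀, ← Real.rpow_natCast, ← Real.rpow_mul (by positivity)]
  norm_num [ha.ne']

lemma L₀_lt_one (ha : 1 < a) : L₀ a < 1 :=
  Real.rpow_lt_one (by positivity) ((div_lt_one (by positivity)).2 ha) (by norm_num)

lemma one_lt_mul_pow_three {x : ℝ} (ha : 0 < a) (hx : L₀ a < x) : 1 < a * x ^ 3 := by
  rw [← mul_L₀_pow_three ha]
  exact mul_lt_mul_of_pos_left (pow_lt_pow_left₀ hx (L₀_pos ha).le (by norm_num)) ha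

lemma f_L₀ (ha : 0 < a) : f a (L₀ a) = 0 := by
  rw [f, mul_L₀_pow_three ha, sub_self, mul_zero]

lemma f_one : f a 1 = 0 := by
  rw [f, Ifun_one]; ring

lemma f_neg {x : ℝ} (ha : 0 < a) (hx : x ∈ Ioo (L₀ a) 1) : f a x < 0 :=
  mul_neg_of_pos_of_neg (pow_pos (Ifun_pos hx.2) 6)
    (sub_neg.2 (one_lt_mul_pow_three ha hx.1))

lemma continuousOn_f {b : ℝ} (hb : b ≤ 1) : ContinuousOn (f a) (Icc b 1) :=
  ((continuousOn_Ifun hb).pow 6).mul (by fun_prop)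

lemma tendsto_f_L₀ (ha : 1 < a) : Tendsto (f a) (𝓝[>] L₀ a) (𝓝 0) := by
  have hL := L₀_lt_one ha
  have hc := (continuousOn_f (a := a) hL.le).continuousWithinAt (left_mem_Icc.2 hL.le)
  rw [← f_L₀ (zero_lt_one.trans ha)]
  exact (hc.mono_of_mem_nhdsWithin (Icc_mem_nhdsGT hL)).tendsto

lemma tendsto_f_one : Tendsto (f a) (𝓝[<] 1) (𝓝 0) := by
  have hc := (continuousOn_f (a := a) zero_le_one).continuousWithinAt (right_mem_Icc.2 zero_le_one)
  rw [← f_one (a := a)]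
  exact (hc.mono_of_mem_nhdsWithin (Icc_mem_nhdsLT one_pos)).tendsto

lemma hasDerivAt_f {r : ℝ} (hr : r < 1) :
    HasDerivAt (f a)
      (3 * Ifun r ^ 5 * (2 * deriv Ifun r * (1 - a * r ^ 3) - Ifun r * (a * r ^ 2))) r := by
  have hI := (hasDerivAt_Ifun hr).differentiableAt.hasDerivAt
  refine ((hI.fun_pow 6).fun_mul (((hasDerivAt_pow 3 r).const_mul a).const_sub 1)).congr_deriv ?_
  push_cast; ring

lemma deriv_f_eq_zero_iff {r : ℝ} (hr : r < 1) (har : a * r ^ 3 ≠ 1) :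
    deriv (f a) r = 0 ↔ w₁ r = w₂ a r := by
  have hI : Ifun r ≠ 0 := (Ifun_pos hr).ne'
  rw [(hasDerivAt_f hr).deriv, w₁, w₂, div_eq_div_iff hI (sub_ne_zero.2 har.symm),
    mul_eq_zero, or_iff_right (by positivity), sub_eq_zero]
  constructor <;> intro h <;> linarith

lemma strictAntiOn_w₁ : StrictAntiOn w₁ (Iio 1) := by
  intro r hr s hs hrs
  have hw₁ : ∀ x < 1, w₁ x = -(2 * Real.sqrt 3) * (integrand x / Ifun x) := fun x hx => by
    rw [w₁, deriv_Ifun hx]; ring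
  have key : integrand r / Ifun r < integrand s / Ifun s :=
    div_lt_div₀ (strictMonoOn_integrand hr hs hrs) (Ifun_lt_Ifun hrs hs.le).le
      (integrand_pos hs).le (Ifun_pos hs)
  rw [hw₁ r hr, hw₁ s hs]
  exact mul_lt_mul_of_neg_left key (by simp)

lemma strictMonoOn_w₂ (ha : 0 < a) : StrictMonoOn (w₂ a) (Ioi (L₀ a)) := by
  intro r hr s hs hrs
  have hr0 : 0 < r := (L₀_pos ha).trans hr
  have hs0 : 0 < s := hr0.trans hrs
  have hr' := sub_pos.2 (one_lt_mul_pow_three ha hr)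
  have hs' := sub_pos.2 (one_lt_mul_pow_three ha hs)
  rw [w₂, w₂, ← neg_div_neg_eq, ← neg_div_neg_eq (a * s ^ 2), neg_sub, neg_sub,
    div_lt_div_iff₀ hr' hs']
  have : 0 < a * (s - r) * ((s + r) + a * r ^ 2 * s ^ 2) :=
    mul_pos (mul_pos ha (sub_pos.2 hrs)) (by positivity)
  nlinarith

lemma eq_of_deriv_f_eq_zero (ha : 0 < a) {x y : ℝ} (hx : x ∈ Ioo (L₀ a) 1)
    (hy : y ∈ Ioo (L₀ a) 1) (hdx : deriv (f a) x = 0) (hdy : deriv (f a) y = 0) : x = y :=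
  (strictAntiOn_w₁.mono Ioo_subset_Iio_self).eq_of_eq_of_strictMonoOn
    ((strictMonoOn_w₂ ha).mono Ioo_subset_Ioi_self) hx hy
    ((deriv_f_eq_zero_iff hx.2 (one_lt_mul_pow_three ha hx.1).ne').1 hdx)
    ((deriv_f_eq_zero_iff hy.2 (one_lt_mul_pow_three ha hy.1).ne').1 hdy)

lemma exists_isMinOn_f (ha : 1 < a) :
    ∃ r ∈ Ioo (L₀ a) 1, IsMinOn (f a) (Icc (L₀ a) 1) r := by
  have ha0 : 0 < a := zero_lt_one.trans ha
  have hL := L₀_lt_one ha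
  obtain ⟨r, hr, hmin⟩ :=
    isCompact_Icc.exists_isMinOn (nonempty_Icc.2 hL.le) (continuousOn_f hL.le)
  obtain ⟨m, hm⟩ := exists_between hL
  have hfr : f a r < 0 := (isMinOn_iff.1 hmin m (Ioo_subset_Icc_self hm)).trans_lt (f_neg ha0 hm)
  refine ⟨r, ⟨hr.1.lt_of_ne ?_, hr.2.lt_of_ne ?_⟩, hmin⟩
  · rintro rfl
    exact hfr.ne (f_L₀ ha0)
  · rintro rfl
    exact hfr.ne f_one

end LevelCurve

open LevelCurve in
theorem stmt_17 (K : ℝ) (hK : 0 < K) :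
    let L : ℝ := (1/(1+K)) ^ ((1:ℝ)/3)
    let f : ℝ → ℝ := fun r => (Ifun r)^6 * (1 - (1+K)*r^3)
    (∀ r ∈ Set.Ioo L 1, f r < 0) ∧
      Filter.Tendsto f (nhdsWithin L (Set.Ioi L)) (nhds 0) ∧
      Filter.Tendsto f (nhdsWithin 1 (Set.Iio 1)) (nhds 0) ∧
      (∃ r ∈ Set.Ioo L 1, deriv f r = 0 ∧
        (∀ x ∈ Set.Ioo L 1, deriv f x = 0 → x = r) ∧
        (∀ x ∈ Set.Ioo L 1, f r ≤ f x)) := by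
  intro L f
  have ha : 1 < 1 + K := by linarith
  obtain ⟨r, hr, hmin⟩ := exists_isMinOn_f ha
  have hcrit : deriv f r = 0 := (hmin.isLocalMin (Icc_mem_nhds hr.1 hr.2)).deriv_eq_zero
  exact ⟨fun x hx => f_neg (by linarith) hx, tendsto_f_L₀ ha, tendsto_f_one, r, hr, hcrit,
    fun x hx hdx => eq_of_deriv_f_eq_zero (by linarith) hx hr hdx hcrit,
    fun x hx => isMinOn_iff.1 hmin x (Ioo_subset_Icc_self hx)⟩
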